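/- For every integer k ≥ 1: the formula ∘¬^{2k}∘p is a theorem of H^{2(k+1)−1} (i.e., ∅ ⊢_{H^{2(k+1)−1}} ∘¬^{2k}∘p), but it is not a theorem of H^{2k−1} (i.e., not ∅ ⊢_{H^{2k−1}} ∘¬^{2k}∘p). Consequently the chain ⊢_{H^1} ⊆ ⊢_{H^3} ⊆ ⊢_{H^5} ⊆ … is strictly increasing. -/

import Mathlib

/-- Formulas over the signature Σ with unary ¬, ∘ and binary ∧, ∨, →,
freely generated from a denumerable set of propositional variables. -/
inductive Fm : Type where
  | var : ℕ → Fm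
  | neg : Fm → Fm
  | circ : Fm → Fm
  | conj : Fm → Fm → Fm
  | disj : Fm → Fm → Fm
  | imp : Fm → Fm → Fm
deriving DecidableEq

/-- Substitutions act homomorphically on formulas. -/
def subst (σ : ℕ → Fm) : Fm → Fm
  | .var n => σ n
  | .neg φ => .neg (subst σ φ)
  | .circ φ => .circ (subst σ φ)
  | .conj φ ψ => .conj (subst σ φ) (subst σ ψ)
  | .disj φ ψ => .disj (subst σ φ) (subst σ ψ)
  | .imp φ ψ => .imp (subst σ φ) (subst σ ψ)

/-- A Set-Fmla rule schema: a finite antecedent and a single succedent formula. -/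
abbrev Rule : Type := Finset Fm × Fm

/-- Derivability in a Set-Fmla Hilbert system: `Derives H Γ φ` holds iff φ can be
obtained from members of Γ by finitely many applications of substitution instances
of rules of `H`. -/
inductive Derives (H : Set Rule) : Set Fm → Fm → Prop where
  | prem : ∀ {Γ : Set Fm} {φ : Fm}, φ ∈ Γ → Derives H Γ φ
  | rule : ∀ {Γ : Set Fm} (r : Rule) (σ : ℕ → Fm), r ∈ H →
      (∀ ψ ∈ r.1, Derives H Γ (subst σ ψ)) → Derives H Γ (subst σ r.2)

/-- Iterated negation: `negIter j φ = ¬^j φ`. -/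
def negIter : ℕ → Fm → Fm
  | 0, φ => φ
  | n + 1, φ => .neg (negIter n φ)

/-- (Ax10)  p ∨ ¬p. -/
def ax10 : Fm := .disj (.var 0) (.neg (.var 0))
/-- (bc1)  ∘p → (p → (¬p → q)). -/
def bc1 : Fm := .imp (.circ (.var 0)) (.imp (.var 0) (.imp (.neg (.var 0)) (.var 1)))
/-- (ci)  ¬∘p → (p ∧ ¬p). -/
def ci : Fm := .imp (.neg (.circ (.var 0))) (.conj (.var 0) (.neg (.var 0)))
/-- (ci_j)  ∘¬^j∘p. -/
def cij (j : ℕ) : Fm := .circ (negIter j (.circ (.var 0)))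

/-- `HmCi B` : the Hilbert system extending the positive-classical base `B`
with (Ax10), (bc1), (ci) and (ci_j) for every j ≥ 0. -/
def HmCi (B : Set Rule) : Set Rule :=
  B ∪ {(∅, ax10), (∅, bc1), (∅, ci)} ∪ {r : Rule | ∃ j : ℕ, r = (∅, cij j)}

/-- `HkSys B k` : the Hilbert system extending the positive-classical base `B`
with (Ax10), (bc1), (ci) and (ci_j) for 0 ≤ j ≤ k only. -/
def HkSys (B : Set Rule) (k : ℕ) : Set Rule :=
  B ∪ {(∅, ax10), (∅, bc1), (∅, ci)} ∪ {r : Rule | ∃ j ≤ k, r = (∅, cij j)}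

/-- Carrier V_k = {1,…,2(k+1)} of the matrix M_k. -/
def Vk (k : ℕ) : Set ℕ := {x | 1 ≤ x ∧ x ≤ 2 * (k + 1)}
/-- Designated set D_k = {k+2,…,2(k+1)} of the matrix M_k. -/
def Dk (k : ℕ) : Set ℕ := {x | k + 2 ≤ x ∧ x ≤ 2 * (k + 1)}

instance (k x : ℕ) : Decidable (x ∈ Dk k) :=
  inferInstanceAs (Decidable (k + 2 ≤ x ∧ x ≤ 2 * (k + 1)))

/-- Disjunction of M_k: 1 if both arguments are undesignated, k+2 otherwise. -/
def mOr (k x y : ℕ) : ℕ := if x ∉ Dk k ∧ y ∉ Dk k then 1 else k + 2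
/-- Conjunction of M_k: k+2 if both arguments are designated, 1 otherwise. -/
def mAnd (k x y : ℕ) : ℕ := if x ∈ Dk k ∧ y ∈ Dk k then k + 2 else 1
/-- Implication of M_k: 1 if the first argument is designated and the second is not,
k+2 otherwise. -/
def mImp (k x y : ℕ) : ℕ := if x ∈ Dk k ∧ y ∉ Dk k then 1 else k + 2
/-- Consistency operator of M_k: 1 at 2(k+1), k+2 elsewhere. -/
def mCirc (k x : ℕ) : ℕ := if x = 2 * (k + 1) then 1 else k + 2
/-- Negation of M_k: ¬x = k+2 if x ∈ {1, 2(k+1)}; ¬x = x + (k+1) if 2 ≤ x ≤ k+1;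
¬x = x − k if k+2 ≤ x ≤ 2k+1 (values outside the carrier are irrelevant). -/
def mNeg (k x : ℕ) : ℕ :=
  if x = 1 ∨ x = 2 * (k + 1) then k + 2
  else if 2 ≤ x ∧ x ≤ k + 1 then x + (k + 1)
  else if k + 2 ≤ x ∧ x ≤ 2 * k + 1 then x - k
  else x

/-- Classical conjunction on the two-element Boolean matrix B₂ (carrier {0,1}). -/
def b2And (x y : ℕ) : ℕ := if x = 1 ∧ y = 1 then 1 else 0
/-- Classical disjunction on B₂. -/
def b2Or (x y : ℕ) : ℕ := if x = 1 ∨ y = 1 then 1 else 0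
/-- Classical implication on B₂. -/
def b2Imp (x y : ℕ) : ℕ := if x = 1 ∧ y = 0 then 0 else 1
/-- The map h : V_k → {0,1} sending designated values to 1 and the rest to 0. -/
def hmap (k x : ℕ) : ℕ := if x ∈ Dk k then 1 else 0

/-- Homomorphic valuations on the matrix M_k. -/
def IsValMk (k : ℕ) (v : Fm → ℕ) : Prop :=
  (∀ φ : Fm, v φ ∈ Vk k) ∧
  (∀ φ ψ : Fm, v (.conj φ ψ) = mAnd k (v φ) (v ψ)) ∧
  (∀ φ ψ : Fm, v (.disj φ ψ) = mOr k (v φ) (v ψ)) ∧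
  (∀ φ ψ : Fm, v (.imp φ ψ) = mImp k (v φ) (v ψ)) ∧
  (∀ φ : Fm, v (.neg φ) = mNeg k (v φ)) ∧
  (∀ φ : Fm, v (.circ φ) = mCirc k (v φ))

/-- Valuations on the two-element Boolean matrix B₂ over the signature {∧,∨,→}:
maps into {0,1} commuting with the positive connectives. -/
def IsValB2 (v : Fm → ℕ) : Prop :=
  (∀ φ : Fm, v φ = 0 ∨ v φ = 1) ∧
  (∀ φ ψ : Fm, v (.conj φ ψ) = b2And (v φ) (v ψ)) ∧
  (∀ φ ψ : Fm, v (.disj φ ψ) = b2Or (v φ) (v ψ)) ∧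
  (∀ φ ψ : Fm, v (.imp φ ψ) = b2Imp (v φ) (v ψ))

/-- A rule is sound for B₂ when every B₂-valuation designating all its premises
designates its conclusion. -/
def SoundB2 (r : Rule) : Prop :=
  ∀ v : Fm → ℕ, IsValB2 v → (∀ ψ ∈ r.1, v ψ = 1) → v r.2 = 1

/-- Positive formulas: built from variables using only ∧, ∨, →. -/
inductive Positive : Fm → Prop where
  | var : ∀ n : ℕ, Positive (.var n)
  | conj : ∀ {φ ψ : Fm}, Positive φ → Positive ψ → Positive (.conj φ ψ)
  | disj : ∀ {φ ψ : Fm}, Positive φ → Positive ψ → Positive (.disj φ ψ)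
  | imp : ∀ {φ ψ : Fm}, Positive φ → Positive ψ → Positive (.imp φ ψ)

/-! The formula ∘¬^{2k}∘p is literally the axiom (ci_{2k}) of H^{2k+1}. To see that H^{2k-1}
misses it, use the matrix M_k. Its positive reduct maps onto B₂ by collapsing designated values
to 1, so every rule of the positive base stays sound, and (Ax10), (bc1), (ci) hold by
inspection. Negation runs through the cycle 1 ↦ k+2 ↦ 2 ↦ k+3 ↦ ⋯ ↦ k+1 ↦ 2k+2, and 2k+2 is the
only value at which ∘ is undesignated. Since ∘x ∈ {1, k+2}, ¬^j∘x lands on 2k+2 only for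
j ≥ 2k, so (ci_j) is valid for j < 2k, while p ↦ 1 gives ¬^{2k}∘p the value 2k+2. -/

lemma subst_var (φ : Fm) : subst .var φ = φ := by
  induction φ <;> simp [subst, *]

lemma Derives.mono {H H' : Set Rule} (hH : H ⊆ H') {Γ : Set Fm} {φ : Fm}
    (h : Derives H Γ φ) : Derives H' Γ φ := by
  induction h with
  | prem h => exact .prem h
  | rule r σ hr _ ih => exact .rule r σ (hH hr) ih

lemma Derives.of_axiom_mem {H : Set Rule} {φ : Fm} (h : ((∅ : Finset Fm), φ) ∈ H)
    (Γ : Set Fm) : Derives H Γ φ := by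
  simpa [subst_var] using Derives.rule (Γ := Γ) _ .var h (by simp)

lemma hkSys_mono (B : Set Rule) {m n : ℕ} (hmn : m ≤ n) : HkSys B m ⊆ HkSys B n := by
  rintro r (hr | ⟨j, hj, rfl⟩)
  · exact Or.inl hr
  · exact Or.inr ⟨j, hj.trans hmn, rfl⟩

lemma derives_cij_hkSys (B : Set Rule) {j n : ℕ} (hj : j ≤ n) (Γ : Set Fm) :
    Derives (HkSys B n) Γ (cij j) :=
  .of_axiom_mem (Or.inr ⟨j, hj, rfl⟩) Γ

section Mk

variable {k : ℕ}

lemma one_mem_Vk : 1 ∈ Vk k := by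
  simp only [Vk, Set.mem_ofPred_eq]; omega

lemma one_notMem_Dk : 1 ∉ Dk k := by
  simp only [Dk, Set.mem_ofPred_eq]; omega

lemma add_two_mem_Dk : k + 2 ∈ Dk k := by
  simp only [Dk, Set.mem_ofPred_eq]; omega

lemma mAnd_mem_Dk {x y : ℕ} : mAnd k x y ∈ Dk k ↔ x ∈ Dk k ∧ y ∈ Dk k := by
  unfold mAnd; split_ifs with h <;> simp [h, one_notMem_Dk, add_two_mem_Dk]

lemma mOr_mem_Dk {x y : ℕ} : mOr k x y ∈ Dk k ↔ x ∈ Dk k ∨ y ∈ Dk k := by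
  unfold mOr; split_ifs with h <;> simp only [one_notMem_Dk, add_two_mem_Dk] <;> tauto

lemma mImp_mem_Dk {x y : ℕ} : mImp k x y ∈ Dk k ↔ (x ∈ Dk k → y ∈ Dk k) := by
  unfold mImp; split_ifs with h <;> simp only [one_notMem_Dk, add_two_mem_Dk] <;> tauto

lemma mCirc_mem_Dk {x : ℕ} : mCirc k x ∈ Dk k ↔ x ≠ 2 * (k + 1) := by
  unfold mCirc; split_ifs with h <;> simp [h, one_notMem_Dk, add_two_mem_Dk]

lemma mNeg_mem_Dk_of_notMem {x : ℕ} (hx : x ∈ Vk k) (h : x ∉ Dk k) : mNeg k x ∈ Dk k := by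
  simp only [Vk, Dk, Set.mem_ofPred_eq] at *
  unfold mNeg; split_ifs <;> omega

lemma mNeg_notMem_Dk {x : ℕ} (h : x ∈ Dk k) (hx : x ≠ 2 * (k + 1)) : mNeg k x ∉ Dk k := by
  simp only [Dk, Set.mem_ofPred_eq] at *
  unfold mNeg; split_ifs <;> omega

lemma mNeg_mCirc_mem_Dk_iff (hk : 1 ≤ k) {x : ℕ} :
    mNeg k (mCirc k x) ∈ Dk k ↔ x = 2 * (k + 1) := by
  simp only [Dk, Set.mem_ofPred_eq]
  unfold mNeg mCirc; split_ifs <;> omega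

lemma mNeg_top : mNeg k (2 * (k + 1)) = k + 2 := by
  unfold mNeg; split_ifs <;> omega

lemma mCirc_eq_one_or_mNeg_one (x : ℕ) : mCirc k x = 1 ∨ mCirc k x = mNeg k 1 := by
  unfold mCirc mNeg; split_ifs <;> omega

lemma mNeg_iterate_one {i : ℕ} (hi : i ≤ k) :
    (mNeg k)^[2 * i] 1 = i + 1 ∧ (mNeg k)^[2 * i + 1] 1 = k + 2 + i := by
  induction i with
  | zero => simp [mNeg]
  | succ i ih =>
    obtain ⟨-, hodd⟩ := ih (by omega)
    have heven : (mNeg k)^[2 * (i + 1)] 1 = i + 2 := by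
      rw [show 2 * (i + 1) = (2 * i + 1) + 1 by ring, Function.iterate_succ_apply', hodd]
      unfold mNeg; split_ifs <;> omega
    refine ⟨heven, ?_⟩
    rw [Function.iterate_succ_apply', heven]
    unfold mNeg; split_ifs <;> omega

lemma mNeg_iterate_one_ne_top {j : ℕ} (hj : j ≤ 2 * k) : (mNeg k)^[j] 1 ≠ 2 * (k + 1) := by
  obtain ⟨i, rfl | rfl⟩ := Nat.even_or_odd' j
  · rw [(mNeg_iterate_one (k := k) (by omega)).1]; omega
  · rw [(mNeg_iterate_one (k := k) (by omega)).2]; omega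

lemma mNeg_iterate_one_eq_top : (mNeg k)^[2 * k + 1] 1 = 2 * (k + 1) := by
  rw [(mNeg_iterate_one le_rfl).2]; ring

end Mk

section Valuations

variable {k : ℕ} {v : Fm → ℕ}

lemma IsValMk.comp_subst (hv : IsValMk k v) (σ : ℕ → Fm) :
    IsValMk k (fun φ => v (subst σ φ)) := by
  obtain ⟨hV, hAnd, hOr, hImp, hNeg, hCirc⟩ := hv
  exact ⟨fun _ => hV _, fun _ _ => hAnd _ _, fun _ _ => hOr _ _, fun _ _ => hImp _ _,
    fun _ => hNeg _, fun _ => hCirc _⟩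

lemma IsValMk.map_negIter (hv : IsValMk k v) (j : ℕ) (φ : Fm) :
    v (negIter j φ) = (mNeg k)^[j] (v φ) := by
  obtain ⟨-, -, -, -, hNeg, -⟩ := hv
  induction j with
  | zero => rfl
  | succ j ih => rw [negIter, hNeg, ih, Function.iterate_succ_apply']

lemma hmap_eq_one_iff {x : ℕ} : hmap k x = 1 ↔ x ∈ Dk k := by
  unfold hmap; split_ifs with h <;> simp [h]

lemma IsValMk.isValB2_hmap (hv : IsValMk k v) : IsValB2 (fun φ => hmap k (v φ)) := by
  obtain ⟨-, hAnd, hOr, hImp, -, -⟩ := hv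
  refine ⟨fun φ => ?_, fun φ ψ => ?_, fun φ ψ => ?_, fun φ ψ => ?_⟩
  · simp only [hmap]; split_ifs <;> simp
  all_goals
    simp only [hAnd, hOr, hImp, hmap, b2And, b2Or, b2Imp, mAnd, mOr, mImp]
    split_ifs <;> simp_all [one_notMem_Dk, add_two_mem_Dk]

def evalMk (k : ℕ) (a : ℕ → ℕ) : Fm → ℕ
  | .var n => a n
  | .neg φ => mNeg k (evalMk k a φ)
  | .circ φ => mCirc k (evalMk k a φ)
  | .conj φ ψ => mAnd k (evalMk k a φ) (evalMk k a ψ)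
  | .disj φ ψ => mOr k (evalMk k a φ) (evalMk k a ψ)
  | .imp φ ψ => mImp k (evalMk k a φ) (evalMk k a ψ)

lemma isValMk_evalMk {a : ℕ → ℕ} (ha : ∀ n, a n ∈ Vk k) : IsValMk k (evalMk k a) := by
  refine ⟨fun φ => ?_, fun _ _ => rfl, fun _ _ => rfl, fun _ _ => rfl, fun _ => rfl,
    fun _ => rfl⟩
  induction φ with
  | var n => exact ha n
  | neg φ ih =>
    simp only [Vk, Set.mem_ofPred_eq, evalMk] at *
    unfold mNeg; split_ifs <;> omega
  | circ => simp only [Vk, Set.mem_ofPred_eq, evalMk, mCirc]; split_ifs <;> omega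
  | conj => simp only [Vk, Set.mem_ofPred_eq, evalMk, mAnd]; split_ifs <;> omega
  | disj => simp only [Vk, Set.mem_ofPred_eq, evalMk, mOr]; split_ifs <;> omega
  | imp => simp only [Vk, Set.mem_ofPred_eq, evalMk, mImp]; split_ifs <;> omega

end Valuations

section Validity

variable {k : ℕ}

def ValidMk (k : ℕ) (r : Rule) : Prop :=
  ∀ v : Fm → ℕ, IsValMk k v → (∀ ψ ∈ r.1, v ψ ∈ Dk k) → v r.2 ∈ Dk k

lemma Derives.mem_Dk {H : Set Rule} (hH : ∀ r ∈ H, ValidMk k r) {Γ : Set Fm} {φ : Fm}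
    (h : Derives H Γ φ) {v : Fm → ℕ} (hv : IsValMk k v) (hΓ : ∀ ψ ∈ Γ, v ψ ∈ Dk k) :
    v φ ∈ Dk k := by
  induction h with
  | prem hmem => exact hΓ _ hmem
  | rule r σ hr _ ih => exact hH r hr _ (hv.comp_subst σ) ih

lemma validMk_of_soundB2 {r : Rule} (hr : SoundB2 r) : ValidMk k r := fun _ hv hprem =>
  hmap_eq_one_iff.mp (hr _ hv.isValB2_hmap fun ψ hψ => hmap_eq_one_iff.mpr (hprem ψ hψ))

lemma validMk_ax10 : ValidMk k (∅, ax10) := by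
  rintro v ⟨hV, -, hOr, -, hNeg, -⟩ -
  change v (.disj _ _) ∈ Dk k
  rw [hOr, hNeg, mOr_mem_Dk]
  by_cases hd : v (.var 0) ∈ Dk k
  · exact Or.inl hd
  · exact Or.inr (mNeg_mem_Dk_of_notMem (hV _) hd)

lemma validMk_bc1 : ValidMk k (∅, bc1) := by
  rintro v ⟨-, -, -, hImp, hNeg, hCirc⟩ -
  change v (.imp _ _) ∈ Dk k
  simp only [hImp, hNeg, hCirc, mImp_mem_Dk, mCirc_mem_Dk]
  exact fun hcons hp hnp => absurd hnp (mNeg_notMem_Dk hp hcons)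

lemma validMk_ci (hk : 1 ≤ k) : ValidMk k (∅, ci) := by
  rintro v ⟨-, hAnd, -, hImp, hNeg, hCirc⟩ -
  change v (.imp _ _) ∈ Dk k
  simp only [hImp, hNeg, hCirc, hAnd, mImp_mem_Dk, mAnd_mem_Dk, mNeg_mCirc_mem_Dk_iff hk]
  rintro htop
  rw [htop, mNeg_top]
  exact ⟨by simp only [Dk, Set.mem_ofPred_eq]; omega, add_two_mem_Dk⟩

lemma validMk_cij {j : ℕ} (hj : j < 2 * k) : ValidMk k (∅, cij j) := by
  rintro v hv -
  have hCirc := hv.2.2.2.2.2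
  change v (.circ _) ∈ Dk k
  rw [hCirc, hv.map_negIter, hCirc, mCirc_mem_Dk]
  rcases mCirc_eq_one_or_mNeg_one (k := k) (v (.var 0)) with h | h
  · rw [h]; exact mNeg_iterate_one_ne_top (by omega)
  · rw [h, ← Function.iterate_succ_apply]; exact mNeg_iterate_one_ne_top (by omega)

lemma validMk_hkSys {B : Set Rule} (hB : ∀ r ∈ B, SoundB2 r) (hk : 1 ≤ k) :
    ∀ r ∈ HkSys B (2 * k - 1), ValidMk k r := by
  rintro r ((hr | rfl | rfl | rfl) | ⟨j, hj, rfl⟩)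
  · exact validMk_of_soundB2 (hB r hr)
  · exact validMk_ax10
  · exact validMk_bc1
  · exact validMk_ci hk
  · exact validMk_cij (by omega)

lemma evalMk_cij_two_mul : evalMk k (fun _ => 1) (cij (2 * k)) = 1 := by
  have hv := isValMk_evalMk (k := k) (a := fun _ => 1) fun _ => one_mem_Vk
  have hcirc : mCirc k 1 = mNeg k 1 := by unfold mCirc mNeg; split_ifs <;> omega
  change mCirc k (evalMk k _ (negIter (2 * k) (.circ (.var 0)))) = 1
  rw [hv.map_negIter]
  change mCirc k ((mNeg k)^[2 * k] (mCirc k 1)) = 1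
  rw [hcirc, ← Function.iterate_succ_apply, mNeg_iterate_one_eq_top, mCirc, if_pos rfl]

end Validity

theorem not_derives_cij_two_mul {B : Set Rule} (hB : ∀ r ∈ B, SoundB2 r) {k : ℕ}
    (hk : 1 ≤ k) : ¬ Derives (HkSys B (2 * k - 1)) ∅ (cij (2 * k)) := by
  intro h
  have hdes := h.mem_Dk (validMk_hkSys hB hk) (isValMk_evalMk fun _ => one_mem_Vk) (by simp)
  rw [evalMk_cij_two_mul] at hdes
  exact one_notMem_Dk hdes

theorem stmt11_general (B : Set Rule)
    (hsnd : ∀ r ∈ B, SoundB2 r)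
    (k : ℕ) (hk : 1 ≤ k) :
    Derives (HkSys B (2 * (k + 1) - 1)) ∅ (cij (2 * k)) ∧
    ¬ Derives (HkSys B (2 * k - 1)) ∅ (cij (2 * k)) ∧
    (∀ (Γ : Set Fm) (φ : Fm),
      Derives (HkSys B (2 * k - 1)) Γ φ → Derives (HkSys B (2 * (k + 1) - 1)) Γ φ) ∧
    Derives (HkSys B (2 * k - 1)) ≠ Derives (HkSys B (2 * (k + 1) - 1)) := by
  have hder := derives_cij_hkSys B (show 2 * k ≤ 2 * (k + 1) - 1 by omega) ∅
  have hnot := not_derives_cij_two_mul hsnd hk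
  exact ⟨hder, hnot, fun _ _ => Derives.mono (hkSys_mono B (by omega)),
    fun heq => hnot (heq ▸ hder)⟩

/-- ∘¬^{2k}∘p is a theorem of H^{2(k+1)−1} but not of H^{2k−1};
consequently the chain ⊢_{H^1} ⊆ ⊢_{H^3} ⊆ ⊢_{H^5} ⊆ … is strictly increasing. -/
theorem stmt11 (B : Set Rule)
    (hpos : ∀ r ∈ B, (∀ ψ ∈ r.1, Positive ψ) ∧ Positive r.2)
    (hsnd : ∀ r ∈ B, SoundB2 r)
    (k : ℕ) (hk : 1 ≤ k) :
    Derives (HkSys B (2 * (k + 1) - 1)) ∅ (cij (2 * k)) ∧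
    ¬ Derives (HkSys B (2 * k - 1)) ∅ (cij (2 * k)) ∧
    (∀ (Γ : Set Fm) (φ : Fm),
      Derives (HkSys B (2 * k - 1)) Γ φ → Derives (HkSys B (2 * (k + 1) - 1)) Γ φ) ∧
    Derives (HkSys B (2 * k - 1)) ≠ Derives (HkSys B (2 * (k + 1) - 1)) :=
  stmt11_general B hsnd k hk
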